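/- arXiv:2312.07092 — 3 statements merged into one kernel-verified Lean document; each statement's English description precedes it below -/
import Mathlib

section
/- For every nonempty set V ⊆ ℤ, every q ∈ (2,4) and every μ > 0, the set {E_{q,V}(u) : u ∈ H¹_μ(ℝ)} is bounded from below; that is, 𝓔_{q,V}(μ) > −∞. -/
/-! On an interval `(v, v + L]` the fundamental theorem of calculus and Cauchy–Schwarz give
`u(v)² ≤ (2/L) ∫ u² + 2L ∫ u'²`. For `L ≤ 1` these intervals are disjoint as `v` runs over `ℤ`, so
`∑_{v ∈ V} u(v)² ≤ 2μ/L + 2L ‖u'‖²`; the choice `L = (1 + ‖u'‖²)^{-1/2}` makes this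
`O((1 + ‖u'‖²)^{1/2})`. Since the `ℓ^{q/2}` norm is dominated by the `ℓ¹` norm,
`∑_{v ∈ V} |u(v)|^q = O((1 + ‖u'‖²)^{q/4})`, and as `q/4 < 1` Young's inequality lets the kinetic
term `½ ‖u'‖²` absorb it. -/

open MeasureTheory

/-- `u` is (the continuous representative of) an `H¹(ℝ)` function with weak
derivative `u'`: both `u` and `u'` are square-integrable and `u` is a
primitive of `u'`. -/
def InH1 (u u' : ℝ → ℝ) : Prop :=
  Integrable (fun x => (u x) ^ 2) ∧ Integrable (fun x => (u' x) ^ 2) ∧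
    ∀ a b : ℝ, u b - u a = ∫ x in a..b, u' x

/-- The mass `∫_ℝ u²`. -/
noncomputable def mass (u : ℝ → ℝ) : ℝ := ∫ x : ℝ, (u x) ^ 2

/-- The energy `E_{q,V}(u) = (1/2)∫ |u'|² − (1/q)∑_{v ∈ V} |u(v)|^q`,
for a set of vertices `V ⊆ ℤ`. -/
noncomputable def energy (q : ℝ) (V : Set ℤ) (u u' : ℝ → ℝ) : ℝ :=
  (1 / 2) * (∫ x : ℝ, (u' x) ^ 2) - (1 / q) * ∑' v : V, |u ((v : ℤ) : ℝ)| ^ q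

/-- The set of energies of `H¹` functions of mass `μ`;
its infimum is the ground-state level `𝓔_{q,V}(μ)`. -/
def levelSet (q : ℝ) (V : Set ℤ) (μ : ℝ) : Set ℝ :=
  {E | ∃ u u' : ℝ → ℝ, InH1 u u' ∧ mass u = μ ∧ E = energy q V u u'}


open Set Function

section CauchySchwarz

variable {α : Type*} [MeasurableSpace α] {μ : Measure α} {f : α → ℝ}

lemma aestronglyMeasurable_abs_of_integrable_sq (hf : Integrable (fun x => f x ^ 2) μ) :
    AEStronglyMeasurable (fun x => |f x|) μ := by
  simpa only [comp_def, Real.sqrt_sq_eq_abs] using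
    Real.continuous_sqrt.comp_aestronglyMeasurable hf.aestronglyMeasurable

lemma memLp_two_abs_of_integrable_sq (hf : Integrable (fun x => f x ^ 2) μ) :
    MemLp (fun x => |f x|) 2 μ := by
  rw [memLp_two_iff_integrable_sq (aestronglyMeasurable_abs_of_integrable_sq hf)]
  simpa only [sq_abs] using hf

lemma sq_integral_abs_le [IsFiniteMeasure μ] (hf : Integrable (fun x => f x ^ 2) μ) :
    (∫ x, |f x| ∂μ) ^ 2 ≤ μ.real univ * ∫ x, f x ^ 2 ∂μ := by
  have hmem : MemLp (fun x => |f x|) (ENNReal.ofReal 2) μ := by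
    simpa only [ENNReal.ofReal_ofNat] using memLp_two_abs_of_integrable_sq hf
  have holder := integral_mul_le_Lp_mul_Lq_of_nonneg Real.HolderConjugate.two_two
    (f := fun _ => (1 : ℝ)) (.of_forall fun _ => zero_le_one)
    (.of_forall fun x => abs_nonneg (f x)) (memLp_const 1) hmem
  simp only [one_mul, Real.rpow_two, one_pow, sq_abs, integral_const, smul_eq_mul, mul_one,
    ← Real.sqrt_eq_rpow] at holder
  rw [← Real.sqrt_mul measureReal_nonneg] at holder
  exact (Real.le_sqrt (integral_nonneg fun x => abs_nonneg _)
    (mul_nonneg measureReal_nonneg (integral_nonneg fun x => sq_nonneg _))).1 holder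

end CauchySchwarz

lemma sum_setIntegral_le_integral {X ι : Type*} [MeasurableSpace X] {μ : Measure X}
    {f : X → ℝ} (hf : Integrable f μ) (hf0 : 0 ≤ᵐ[μ] f) (F : Finset ι) {s : ι → Set X}
    (hs : ∀ i, MeasurableSet (s i)) (hd : Pairwise (Disjoint on s)) :
    ∑ i ∈ F, ∫ x in s i, f x ∂μ ≤ ∫ x, f x ∂μ := by
  rw [← integral_biUnion_finset F (fun i _ => hs i) (hd.set_pairwise _)
    (fun i _ => hf.integrableOn)]
  exact setIntegral_le_integral hf hf0

lemma tsum_rpow_le_of_sum_le {ι : Type*} {a : ι → ℝ} (ha : ∀ i, 0 ≤ a i) {M p : ℝ}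
    (hp : 1 ≤ p) (hsum : ∀ F : Finset ι, ∑ i ∈ F, a i ≤ M) : ∑' i, a i ^ p ≤ M ^ p := by
  have hM : 0 ≤ M := by simpa using hsum ∅
  have hp' : p - 1 + 1 ≠ 0 := by linarith
  refine tsum_le_of_sum_le' (Real.rpow_nonneg hM p) fun F => ?_
  calc ∑ i ∈ F, a i ^ p = ∑ i ∈ F, a i ^ (p - 1) * a i := by
        refine Finset.sum_congr rfl fun i _ => ?_
        rw [← Real.rpow_add_one' (ha i) hp', sub_add_cancel]
    _ ≤ ∑ i ∈ F, M ^ (p - 1) * a i := Finset.sum_le_sum fun i _ =>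
        mul_le_mul_of_nonneg_right
          (Real.rpow_le_rpow (ha i) (by simpa using hsum {i}) (by linarith)) (ha i)
    _ ≤ M ^ (p - 1) * M := by
        rw [← Finset.mul_sum]
        exact mul_le_mul_of_nonneg_left (hsum F) (Real.rpow_nonneg hM _)
    _ = M ^ p := by rw [← Real.rpow_add_one' hM hp', sub_add_cancel]

lemma mul_rpow_le_add {a D y : ℝ} (ha₀ : 0 < a) (ha₁ : a < 1) (hD : 0 ≤ D) (hy : 0 ≤ y) :
    D * y ^ a ≤ y + D ^ (1 - a)⁻¹ := by
  have young := Real.young_inequality_of_nonneg (Real.rpow_nonneg hy a) hD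
    (Real.HolderConjugate.inv_one_sub_inv ha₀ ha₁)
  rw [Real.rpow_rpow_inv hy ha₀.ne', div_inv_eq_mul, div_inv_eq_mul] at young
  nlinarith [Real.rpow_nonneg hD (1 - a)⁻¹]

lemma mass_nonneg (u : ℝ → ℝ) : 0 ≤ mass u := integral_nonneg fun x => sq_nonneg (u x)

section Sobolev

variable {u u' : ℝ → ℝ}

lemma InH1.abs_sub_le_setIntegral_abs (hu : InH1 u u') {a b x : ℝ} (hx : x ∈ Ioc a b) :
    |u a - u x| ≤ ∫ y in Ioc a b, |u' y| := by
  have hint : IntegrableOn (fun y => |u' y|) (Ioc a b) :=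
    ((memLp_two_abs_of_integrable_sq hu.2.1).restrict _).integrable one_le_two
  rw [hu.2.2 x a, intervalIntegral.integral_symm, abs_neg,
    intervalIntegral.integral_of_le hx.1.le]
  calc |∫ y in Ioc a x, u' y| ≤ ∫ y in Ioc a x, |u' y| := abs_integral_le_integral_abs
    _ ≤ ∫ y in Ioc a b, |u' y| :=
      setIntegral_mono_set hint (.of_forall fun y => abs_nonneg _)
        (Ioc_subset_Ioc le_rfl hx.2).eventuallyLE

lemma InH1.sq_le_setIntegral_Ioc (hu : InH1 u u') {L : ℝ} (hL : 0 < L) (v : ℝ) :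
    u v ^ 2 ≤
      2 / L * (∫ x in Ioc v (v + L), u x ^ 2) + 2 * L * ∫ x in Ioc v (v + L), u' x ^ 2 := by
  set I := Ioc v (v + L)
  set K := ∫ x in I, u' x ^ 2
  have hvol : volume.real I = L := by simp [I, hL.le]
  have hCS : (∫ x in I, |u' x|) ^ 2 ≤ L * K := by
    simpa only [measureReal_restrict_apply_univ, hvol] using
      sq_integral_abs_le (μ := volume.restrict I) hu.2.1.restrict
  have hpointwise : ∀ x ∈ I, u v ^ 2 ≤ 2 * u x ^ 2 + 2 * L * K := fun x hx => by
    have hosc : (u v - u x) ^ 2 ≤ L * K :=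
      (sq_le_sq' (abs_le.1 (hu.abs_sub_le_setIntegral_abs hx)).1
        (abs_le.1 (hu.abs_sub_le_setIntegral_abs hx)).2).trans hCS
    nlinarith [sq_nonneg (u v - 2 * u x)]
  have hconst : IntegrableOn (fun _ => 2 * L * K) I := integrableOn_const (by simp [I])
  have hint : ∫ _ in I, u v ^ 2 ≤ ∫ x in I, (2 * u x ^ 2 + 2 * L * K) :=
    setIntegral_mono_on (integrableOn_const (by simp [I]))
      ((hu.1.integrableOn.const_mul 2).add hconst) measurableSet_Ioc hpointwise
  rw [integral_add (hu.1.integrableOn.const_mul 2) hconst, integral_const_mul,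
    setIntegral_const, setIntegral_const, hvol, smul_eq_mul, smul_eq_mul] at hint
  refine le_of_mul_le_mul_left ?_ hL
  rw [mul_add, ← mul_assoc, mul_div_cancel₀ _ hL.ne']
  linarith

lemma pairwise_disjoint_Ioc_intCast {L : ℝ} (hL : L ≤ 1) :
    Pairwise (Disjoint on fun v : ℤ => Ioc (v : ℝ) (v + L)) :=
  (pairwise_disjoint_on _).2 fun m n hmn => Ioc_disjoint_Ioc_of_le <| by
    have : (m : ℝ) + 1 ≤ n := by exact_mod_cast hmn
    linarith

lemma InH1.sum_sq_intCast_le (hu : InH1 u u') {L : ℝ} (hL : 0 < L) (hL₁ : L ≤ 1) (F : Finset ℤ) :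
    ∑ v ∈ F, u v ^ 2 ≤ 2 / L * mass u + 2 * L * ∫ x, u' x ^ 2 := by
  have hd := pairwise_disjoint_Ioc_intCast hL₁
  have hmass := sum_setIntegral_le_integral hu.1 (.of_forall fun x => sq_nonneg (u x)) F
    (fun _ => measurableSet_Ioc) hd
  have hkin := sum_setIntegral_le_integral hu.2.1 (.of_forall fun x => sq_nonneg (u' x)) F
    (fun _ => measurableSet_Ioc) hd
  calc ∑ v ∈ F, u v ^ 2
      ≤ ∑ v ∈ F, (2 / L * (∫ x in Ioc (v : ℝ) (v + L), u x ^ 2)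
          + 2 * L * ∫ x in Ioc (v : ℝ) (v + L), u' x ^ 2) :=
        Finset.sum_le_sum fun v _ => hu.sq_le_setIntegral_Ioc hL v
    _ = 2 / L * (∑ v ∈ F, ∫ x in Ioc (v : ℝ) (v + L), u x ^ 2)
          + 2 * L * ∑ v ∈ F, ∫ x in Ioc (v : ℝ) (v + L), u' x ^ 2 := by
        rw [Finset.sum_add_distrib, Finset.mul_sum, Finset.mul_sum]
    _ ≤ 2 / L * mass u + 2 * L * ∫ x, u' x ^ 2 := by
        gcongr
        exact hmass

lemma InH1.sum_sq_intCast_le_mul_sqrt (hu : InH1 u u') (F : Finset ℤ) :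
    ∑ v ∈ F, u v ^ 2 ≤ (2 * mass u + 2) * √(1 + ∫ x, u' x ^ 2) := by
  set K := ∫ x, u' x ^ 2
  set s := √(1 + K)
  have hK : 0 ≤ K := integral_nonneg fun x => sq_nonneg (u' x)
  have hm := mass_nonneg u
  have hs : 1 ≤ s := Real.one_le_sqrt.2 (by linarith)
  have hs2 : s ^ 2 = 1 + K := Real.sq_sqrt (by linarith)
  refine (hu.sum_sq_intCast_le (inv_pos.2 (by linarith)) (inv_le_one_of_one_le₀ hs) F).trans ?_
  have hKs : s⁻¹ * K ≤ s := by
    rw [inv_mul_le_iff₀ (by linarith)]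
    nlinarith
  rw [div_inv_eq_mul]
  nlinarith

lemma InH1.tsum_rpow_abs_le (hu : InH1 u u') (V : Set ℤ) {q : ℝ} (hq : 2 ≤ q) :
    ∑' v : V, |u v| ^ q ≤ (2 * mass u + 2) ^ (q / 2) * (1 + ∫ x, u' x ^ 2) ^ (q / 4) := by
  have hK : 0 ≤ ∫ x, u' x ^ 2 := integral_nonneg fun x => sq_nonneg (u' x)
  have h := tsum_rpow_le_of_sum_le (a := fun v : V => u v ^ 2) (fun _ => sq_nonneg _)
    (p := q / 2) (by linarith) fun F => by
      simpa only [Finset.sum_map, Embedding.coe_subtype] using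
        hu.sum_sq_intCast_le_mul_sqrt (F.map (Embedding.subtype (· ∈ V)))
  have habs : ∀ x : ℝ, (x ^ 2) ^ (q / 2) = |x| ^ q := fun x => by
    rw [← sq_abs, ← Real.rpow_natCast, ← Real.rpow_mul (abs_nonneg x), Nat.cast_ofNat,
      mul_div_cancel₀ q two_ne_zero]
  rw [Real.mul_rpow (by linarith [mass_nonneg u]) (Real.sqrt_nonneg _), Real.sqrt_eq_rpow,
    ← Real.rpow_mul (by linarith)] at h
  simp only [habs] at h
  convert h using 3
  ring

end Sobolev

theorem stmt1_general (V : Set ℤ) (q μ : ℝ) (hq : 2 < q) (hq' : q < 4) :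
    BddBelow (levelSet q V μ) := by
  set C := 2 / q * (2 * μ + 2) ^ (q / 2)
  refine ⟨-(1 + C ^ (1 - q / 4)⁻¹) / 2, ?_⟩
  rintro _ ⟨u, u', hu, rfl, rfl⟩
  set K := ∫ x, u' x ^ 2
  have hK : 0 ≤ K := integral_nonneg fun x => sq_nonneg (u' x)
  have hvertices : 1 / q * ∑' v : V, |u v| ^ q ≤ C / 2 * (1 + K) ^ (q / 4) := by
    have := hu.tsum_rpow_abs_le V hq.le
    calc 1 / q * ∑' v : V, |u v| ^ q
        ≤ 1 / q * ((2 * mass u + 2) ^ (q / 2) * (1 + K) ^ (q / 4)) := by gcongr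
      _ = C / 2 * (1 + K) ^ (q / 4) := by ring
  have hC : 0 ≤ C :=
    mul_nonneg (by positivity) (Real.rpow_nonneg (by linarith [mass_nonneg u]) _)
  have hyoung := mul_rpow_le_add (a := q / 4) (by linarith) (by linarith) hC
    (by linarith : 0 ≤ 1 + K)
  rw [energy]
  linarith

/-- For every nonempty `V ⊆ ℤ`, `q ∈ (2,4)`, `μ > 0`, the set of energies of
mass-`μ` functions is bounded below, i.e. `𝓔_{q,V}(μ) > -∞`. -/
theorem stmt1 (V : Set ℤ) (hV : V.Nonempty) (q μ : ℝ) (hq : 2 < q) (hq' : q < 4)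
    (hμ : 0 < μ) : BddBelow (levelSet q V μ) :=
  stmt1_general V q μ hq hq'
end

section
/- For every nonempty set V ⊆ ℤ, every q ∈ (2,4) and every μ > 0, the ground-state level is strictly negative: 𝓔_{q,V}(μ) < 0. -/
open MeasureTheory

/-! The infimum is finite and negative; finiteness matters, since `sInf` of a set of reals that is
not bounded below is `0`.

Lower bound: for `0 < ℓ ≤ 1` and `w ∈ ℤ`, writing `u(w) = u(x) - ∫_w^x u'` and averaging over
`x ∈ [w, w + ℓ]` gives `u(w)² ≤ (2/ℓ) ∫_w^{w+ℓ} u² + 2ℓ ∫_w^{w+ℓ} u'²`. These intervals are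
disjoint, so `∑_{v ∈ V} u(v)² ≤ 2μ/ℓ + 2ℓ‖u'‖²`; the choice `ℓ = (‖u'‖² + 1)^{-1/2}` and `q ≥ 2` give
`∑_{v ∈ V} |u(v)|^q ≲ (‖u'‖² + 1)^{q/4}`, which the kinetic term dominates because `q < 4`.

Negativity: a Gaussian profile rescaled to `√t φ(b(x - v))` with `v ∈ V` and mass `μ` has kinetic
energy of order `t²`, while the vertex `v` contributes `t^{q/2}`; for `q < 4` the latter wins as
`t → 0`. -/

open Set Real Filter Topology Function

lemma sq_intervalIntegral_le {f : ℝ → ℝ} {a b : ℝ} (hab : a ≤ b)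
    (hf2 : IntervalIntegrable (fun x => f x ^ 2) volume a b) :
    (∫ x in a..b, f x) ^ 2 ≤ (b - a) * ∫ x in a..b, f x ^ 2 := by
  have hJ : 0 ≤ ∫ x in a..b, f x ^ 2 :=
    intervalIntegral.integral_nonneg hab fun x _ => sq_nonneg _
  by_cases hf : IntervalIntegrable f volume a b
  · rcases hab.eq_or_lt with rfl | hlt
    · simp
    -- Cauchy–Schwarz from expanding `0 ≤ ∫ ((b - a) f - ∫ f)²`.
    have hvar : 0 ≤ ∫ x in a..b, ((b - a) * f x - ∫ x in a..b, f x) ^ 2 :=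
      intervalIntegral.integral_nonneg hab fun x _ => sq_nonneg _
    have hexpand : (fun x => ((b - a) * f x - ∫ x in a..b, f x) ^ 2) = fun x =>
        (b - a) ^ 2 * f x ^ 2 - 2 * (b - a) * (∫ x in a..b, f x) * f x
          + (∫ x in a..b, f x) ^ 2 := by
      ext x; ring
    rw [hexpand, intervalIntegral.integral_add ((hf2.const_mul _).sub (hf.const_mul _))
      intervalIntegrable_const, intervalIntegral.integral_sub (hf2.const_mul _) (hf.const_mul _),
      intervalIntegral.integral_const_mul, intervalIntegral.integral_const_mul,
      intervalIntegral.integral_const, smul_eq_mul] at hvar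
    nlinarith [sub_pos.2 hlt]
  · rw [intervalIntegral.integral_undef hf]
    nlinarith [sub_nonneg.2 hab]

lemma sq_le_of_inH1 {u u' : ℝ → ℝ} (hu : InH1 u u') {ℓ : ℝ} (hℓ : 0 < ℓ) (a : ℝ) :
    u a ^ 2 ≤ 2 / ℓ * (∫ x in a..a + ℓ, u x ^ 2) + 2 * ℓ * ∫ x in a..a + ℓ, u' x ^ 2 := by
  obtain ⟨hu2, hu'2, hftc⟩ := hu
  have hpt : ∀ x ∈ Icc a (a + ℓ),
      u a ^ 2 ≤ 2 * u x ^ 2 + 2 * ℓ * ∫ x in a..a + ℓ, u' x ^ 2 := by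
    intro x hx
    have hcs : (∫ t in a..x, u' t) ^ 2 ≤ ℓ * ∫ x in a..a + ℓ, u' x ^ 2 := by
      refine (sq_intervalIntegral_le hx.1 hu'2.intervalIntegrable).trans (mul_le_mul ?_ ?_ ?_ hℓ.le)
      · linarith [hx.2]
      · exact intervalIntegral.integral_mono_interval le_rfl hx.1 hx.2
          (Eventually.of_forall fun t => sq_nonneg _) hu'2.intervalIntegrable
      · exact intervalIntegral.integral_nonneg hx.1 fun t _ => sq_nonneg _
    rw [show u a = u x - ∫ t in a..x, u' t by linarith [hftc a x]]
    nlinarith [sq_nonneg (u x + ∫ t in a..x, u' t)]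
  have hint := intervalIntegral.integral_mono_on (by linarith) intervalIntegrable_const
    ((hu2.intervalIntegrable.const_mul 2).add intervalIntegrable_const) hpt
  rw [intervalIntegral.integral_add (hu2.intervalIntegrable.const_mul 2) intervalIntegrable_const,
    intervalIntegral.integral_const_mul, intervalIntegral.integral_const,
    intervalIntegral.integral_const, add_sub_cancel_left, smul_eq_mul, smul_eq_mul] at hint
  rw [div_mul_eq_mul_div, ← sub_le_iff_le_add, le_div_iff₀ hℓ]
  nlinarith

lemma sum_intervalIntegral_le_integral {g : ℝ → ℝ} (hg : Integrable g) (hg0 : 0 ≤ g) {ℓ : ℝ}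
    (hℓ0 : 0 ≤ ℓ) (hℓ1 : ℓ ≤ 1) (s : Finset ℤ) :
    ∑ w ∈ s, ∫ x in (w : ℝ)..w + ℓ, g x ≤ ∫ x, g x := by
  have hdisj : (s : Set ℤ).Pairwise (Disjoint on fun w : ℤ => Ioc (w : ℝ) (w + ℓ)) :=
    ((pairwise_disjoint_Ioc_add_intCast (0 : ℝ)).set_pairwise _).mono' fun w w' h =>
      h.mono (Ioc_subset_Ioc (zero_add _).le (by linarith))
        (Ioc_subset_Ioc (zero_add _).le (by linarith))
  simp_rw [intervalIntegral.integral_of_le (le_add_of_nonneg_right hℓ0)]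
  rw [← integral_biUnion_finset s (fun _ _ => measurableSet_Ioc) hdisj
    fun _ _ => hg.integrableOn]
  exact setIntegral_le_integral hg (Eventually.of_forall hg0)

lemma sum_sq_le_of_inH1 {u u' : ℝ → ℝ} (hu : InH1 u u') {ℓ : ℝ} (hℓ0 : 0 < ℓ) (hℓ1 : ℓ ≤ 1)
    (s : Finset ℤ) :
    ∑ w ∈ s, u w ^ 2 ≤ 2 / ℓ * mass u + 2 * ℓ * ∫ x, u' x ^ 2 := calc
  ∑ w ∈ s, u w ^ 2
      ≤ ∑ w ∈ s, (2 / ℓ * (∫ x in (w : ℝ)..w + ℓ, u x ^ 2)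
          + 2 * ℓ * ∫ x in (w : ℝ)..w + ℓ, u' x ^ 2) :=
    Finset.sum_le_sum fun w _ => sq_le_of_inH1 hu hℓ0 w
  _ = 2 / ℓ * (∑ w ∈ s, ∫ x in (w : ℝ)..w + ℓ, u x ^ 2)
        + 2 * ℓ * ∑ w ∈ s, ∫ x in (w : ℝ)..w + ℓ, u' x ^ 2 := by
    rw [Finset.sum_add_distrib, Finset.mul_sum, Finset.mul_sum]
  _ ≤ 2 / ℓ * mass u + 2 * ℓ * ∫ x, u' x ^ 2 := by
    gcongr
    · exact sum_intervalIntegral_le_integral hu.1 (fun x => sq_nonneg _) hℓ0.le hℓ1 s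
    · exact sum_intervalIntegral_le_integral hu.2.1 (fun x => sq_nonneg _) hℓ0.le hℓ1 s

lemma sum_sq_le_mul_sqrt_of_inH1 {u u' : ℝ → ℝ} (hu : InH1 u u') (s : Finset ℤ) :
    ∑ w ∈ s, u w ^ 2 ≤ (2 * mass u + 2) * √((∫ x, u' x ^ 2) + 1) := by
  have hK : 0 ≤ ∫ x, u' x ^ 2 := integral_nonneg fun x => sq_nonneg _
  set r := √((∫ x, u' x ^ 2) + 1)
  have hr1 : 1 ≤ r := Real.one_le_sqrt.2 (by linarith)
  have hr2 : r ^ 2 = (∫ x, u' x ^ 2) + 1 := Real.sq_sqrt (by linarith)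
  refine (sum_sq_le_of_inH1 hu (inv_pos.2 (by linarith)) (inv_le_one_of_one_le₀ hr1) s).trans ?_
  rw [div_inv_eq_mul, ← sub_nonneg]
  have : 0 ≤ r - (∫ x, u' x ^ 2) * r⁻¹ := by
    rw [sub_nonneg, ← div_eq_mul_inv, div_le_iff₀ (by linarith)]
    nlinarith
  nlinarith

lemma Finset.sum_rpow_le_rpow_sum {ι : Type*} (s : Finset ι) {f : ι → ℝ} (hf : ∀ i ∈ s, 0 ≤ f i)
    {p : ℝ} (hp : 1 ≤ p) : ∑ i ∈ s, f i ^ p ≤ (∑ i ∈ s, f i) ^ p := by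
  classical
  induction s using Finset.induction_on with
  | empty => simp [Real.zero_rpow (by linarith : p ≠ 0)]
  | insert i s hi ih =>
    rw [Finset.sum_insert hi, Finset.sum_insert hi]
    have hfs := fun j hj => hf j (Finset.mem_insert_of_mem hj)
    calc f i ^ p + ∑ j ∈ s, f j ^ p ≤ f i ^ p + (∑ j ∈ s, f j) ^ p := by linarith [ih hfs]
      _ ≤ (f i + ∑ j ∈ s, f j) ^ p :=
        Real.add_rpow_le_rpow_add (hf i (Finset.mem_insert_self i s))
          (Finset.sum_nonneg hfs) hp

lemma abs_rpow_eq_sq_rpow (x q : ℝ) : |x| ^ q = (x ^ 2) ^ (q / 2) := by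
  rw [← sq_abs, ← Real.rpow_natCast, ← Real.rpow_mul (abs_nonneg x)]
  ring_nf

lemma sum_abs_rpow_le_of_inH1 {u u' : ℝ → ℝ} (hu : InH1 u u') {q : ℝ} (hq : 2 ≤ q) {V : Set ℤ}
    (s : Finset V) :
    ∑ v ∈ s, |u v| ^ q ≤ (2 * mass u + 2) ^ (q / 2) * ((∫ x, u' x ^ 2) + 1) ^ (q / 4) := by
  have hM : 0 ≤ mass u := integral_nonneg fun x => sq_nonneg _
  have hK : 0 ≤ ∫ x, u' x ^ 2 := integral_nonneg fun x => sq_nonneg _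
  calc ∑ v ∈ s, |u v| ^ q = ∑ v ∈ s, (u v ^ 2) ^ (q / 2) := by
        simp only [abs_rpow_eq_sq_rpow]
    _ ≤ (∑ v ∈ s, u v ^ 2) ^ (q / 2) :=
        s.sum_rpow_le_rpow_sum (fun v _ => sq_nonneg _) (by linarith)
    _ ≤ ((2 * mass u + 2) * √((∫ x, u' x ^ 2) + 1)) ^ (q / 2) := by
        gcongr
        simpa using sum_sq_le_mul_sqrt_of_inH1 hu (s.map (Embedding.subtype (· ∈ V)))
    _ = (2 * mass u + 2) ^ (q / 2) * ((∫ x, u' x ^ 2) + 1) ^ (q / 4) := by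
        rw [Real.mul_rpow (by linarith) (Real.sqrt_nonneg _), Real.sqrt_eq_rpow,
          ← Real.rpow_mul (by linarith)]
        ring_nf

lemma summable_abs_rpow_of_inH1 {u u' : ℝ → ℝ} (hu : InH1 u u') {q : ℝ} (hq : 2 ≤ q)
    (V : Set ℤ) : Summable fun v : V => |u v| ^ q :=
  summable_of_sum_le (fun _ => by positivity) (sum_abs_rpow_le_of_inH1 hu hq)

lemma tsum_abs_rpow_le_of_inH1 {u u' : ℝ → ℝ} (hu : InH1 u u') {q : ℝ} (hq : 2 ≤ q)
    (V : Set ℤ) :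
    ∑' v : V, |u v| ^ q ≤ (2 * mass u + 2) ^ (q / 2) * ((∫ x, u' x ^ 2) + 1) ^ (q / 4) :=
  Real.tsum_le_of_sum_le (fun _ => by positivity) (sum_abs_rpow_le_of_inH1 hu hq)

lemma mul_rpow_le_add_s2 {c x r : ℝ} (hc : 0 ≤ c) (hx : 0 ≤ x) (hr0 : 0 ≤ r) (hr1 : r < 1) :
    c * x ^ r ≤ x + c ^ (1 - r)⁻¹ := by
  have hc' : (c ^ (1 - r)⁻¹) ^ (1 - r) = c := by
    rw [← Real.rpow_mul hc, inv_mul_cancel₀ (by linarith), Real.rpow_one]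
  have := Real.geom_mean_le_arith_mean2_weighted hr0 (by linarith : 0 ≤ 1 - r) hx
    (by positivity : 0 ≤ c ^ (1 - r)⁻¹) (by ring)
  rw [hc'] at this
  nlinarith [mul_le_mul_of_nonneg_right hr1.le hx, Real.rpow_nonneg hc (1 - r)⁻¹]

lemma levelSet_bddBelow {q : ℝ} (hq2 : 2 ≤ q) (hq4 : q < 4) (V : Set ℤ) (μ : ℝ) :
    BddBelow (levelSet q V μ) := by
  set c := 2 / q * (2 * μ + 2) ^ (q / 2)
  refine ⟨-(1 + c ^ (1 - q / 4)⁻¹) / 2, ?_⟩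
  rintro _ ⟨u, u', hu, rfl, rfl⟩
  have hM : 0 ≤ mass u := integral_nonneg fun x => sq_nonneg _
  have hS := tsum_abs_rpow_le_of_inH1 hu hq2 V
  have hY := mul_rpow_le_add_s2 (by positivity : 0 ≤ c) (by positivity : 0 ≤ (∫ x, u' x ^ 2) + 1)
    (by positivity : 0 ≤ q / 4) (by linarith)
  unfold energy
  have : 1 / q * ∑' v : V, |u v| ^ q ≤ c / 2 * ((∫ x, u' x ^ 2) + 1) ^ (q / 4) := by
    calc 1 / q * ∑' v : V, |u v| ^ q
        ≤ 1 / q * ((2 * mass u + 2) ^ (q / 2) * ((∫ x, u' x ^ 2) + 1) ^ (q / 4)) := by gcongr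
      _ = c / 2 * ((∫ x, u' x ^ 2) + 1) ^ (q / 4) := by simp only [c]; field_simp
  linarith

lemma exp_neg_sq_sq (x : ℝ) : exp (-x ^ 2) ^ 2 = exp (-2 * x ^ 2) := by
  rw [← Real.exp_nat_mul]
  ring_nf

lemma inH1_exp_neg_sq : InH1 (fun x => exp (-x ^ 2)) (fun x => -2 * x * exp (-x ^ 2)) := by
  refine ⟨?_, ?_, fun a b => ?_⟩
  · simpa only [exp_neg_sq_sq] using integrable_exp_neg_mul_sq two_pos
  · have := (integrable_rpow_mul_exp_neg_mul_sq two_pos (by norm_num : (-1 : ℝ) < 2)).const_mul 4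
    refine this.congr (Eventually.of_forall fun x => ?_)
    simp only [mul_pow, exp_neg_sq_sq, Real.rpow_two]
    ring
  · refine (intervalIntegral.integral_eq_sub_of_hasDerivAt (f := fun x => exp (-x ^ 2))
      (fun x _ => ?_)
      ((by fun_prop : Continuous fun x : ℝ => -2 * x * exp (-x ^ 2)).intervalIntegrable a b)).symm
    have h : HasDerivAt (fun x : ℝ => -x ^ 2) (-2 * x) x := by
      simpa using (hasDerivAt_pow 2 x).const_mul (-1 : ℝ)
    exact h.exp.congr_deriv (by ring)

lemma mass_exp_neg_sq_pos : 0 < mass fun x => exp (-x ^ 2) := by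
  rw [mass]
  simp only [exp_neg_sq_sq, integral_gaussian]
  positivity

lemma integral_sq_comp_mul_sub (f : ℝ → ℝ) (a c : ℝ) {b : ℝ} (hb : 0 < b) :
    ∫ x, (a * f (b * (x - c))) ^ 2 = a ^ 2 / b * ∫ x, f x ^ 2 := by
  simp only [mul_pow, integral_const_mul]
  rw [integral_sub_right_eq_self (fun x => f (b * x) ^ 2) c,
    Measure.integral_comp_mul_left (fun x => f x ^ 2), abs_of_pos (inv_pos.2 hb), smul_eq_mul]
  ring

lemma InH1.comp_mul_sub {φ φ' : ℝ → ℝ} (h : InH1 φ φ') (a c : ℝ) {b : ℝ} (hb : 0 < b) :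
    InH1 (fun x => a * φ (b * (x - c))) (fun x => a * b * φ' (b * (x - c))) := by
  obtain ⟨h2, h2', hftc⟩ := h
  have hcomp : ∀ {f : ℝ → ℝ} (k : ℝ), Integrable (fun x => f x ^ 2) →
      Integrable fun x => (k * f (b * (x - c))) ^ 2 := fun k hf => by
    simp only [mul_pow]
    exact ((hf.comp_mul_left' hb.ne').comp_sub_right c).const_mul _
  refine ⟨hcomp a h2, hcomp (a * b) h2', fun x y => ?_⟩
  simp only [mul_sub b, mul_assoc, intervalIntegral.integral_const_mul,
    intervalIntegral.integral_comp_mul_sub φ' hb.ne', ← hftc, smul_eq_mul]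
  field_simp

lemma exists_pos_mul_sq_lt_rpow (C : ℝ) {p : ℝ} (hp : p < 2) : ∃ t > 0, C * t ^ 2 < t ^ p := by
  have hlim : Tendsto (fun t : ℝ => C * t ^ (2 - p)) (𝓝[>] 0) (𝓝 0) := by
    have := ((Real.continuousAt_rpow_const 0 (2 - p) (Or.inr (by linarith))).const_mul C).tendsto
    rw [Real.zero_rpow (by linarith), mul_zero] at this
    exact this.mono_left nhdsWithin_le_nhds
  obtain ⟨t, ht1, ht0⟩ :=
    ((hlim.eventually (gt_mem_nhds one_pos)).and self_mem_nhdsWithin).exists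
  refine ⟨t, ht0, ?_⟩
  have ht : t ^ (2 : ℝ) = t ^ (2 - p) * t ^ p := by
    rw [← Real.rpow_add ht0]; ring_nf
  rw [← Real.rpow_two, ht, ← mul_assoc]
  exact mul_lt_of_lt_one_left (Real.rpow_pos_of_pos ht0 p) ht1

lemma exists_mem_levelSet_neg {φ φ' : ℝ → ℝ} (hφ : InH1 φ φ') (hφ0 : φ 0 = 1) (hm : 0 < mass φ)
    {V : Set ℤ} (hV : V.Nonempty) {q : ℝ} (hq2 : 2 ≤ q) (hq4 : q < 4) {μ : ℝ} (hμ : 0 < μ) :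
    ∃ E ∈ levelSet q V μ, E < 0 := by
  obtain ⟨v₀, hv₀⟩ := hV
  obtain ⟨t, ht0, ht⟩ :=
    exists_pos_mul_sq_lt_rpow (q * mass φ * (∫ x, φ' x ^ 2) / (2 * μ)) (p := q / 2) (by linarith)
  have hb : 0 < mass φ * t / μ := by positivity
  have hu := hφ.comp_mul_sub √t v₀ hb
  refine ⟨_, ⟨_, _, hu, ?_, rfl⟩, ?_⟩
  · rw [mass, integral_sq_comp_mul_sub _ _ _ hb, Real.sq_sqrt ht0.le, ← mass]
    field_simp
  · have hv₀ : t ^ (q / 2) ≤ ∑' v : V, |√t * φ (mass φ * t / μ * (v - v₀))| ^ q := by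
      refine le_of_eq_of_le ?_ ((summable_abs_rpow_of_inH1 hu hq2 V).le_tsum ⟨v₀, hv₀⟩
        fun _ _ => by positivity)
      rw [sub_self, mul_zero, hφ0, mul_one, abs_of_nonneg (Real.sqrt_nonneg t), Real.sqrt_eq_rpow,
        ← Real.rpow_mul ht0.le]
      ring_nf
    rw [energy, integral_sq_comp_mul_sub _ _ _ hb, mul_pow, Real.sq_sqrt ht0.le]
    have hq0 : 0 < q := by linarith
    have hkin : 1 / 2 * (t * (mass φ * t / μ) ^ 2 / (mass φ * t / μ) * ∫ x, φ' x ^ 2)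
        = q * mass φ * (∫ x, φ' x ^ 2) / (2 * μ) * t ^ 2 / q := by
      field_simp
    rw [hkin, one_div_mul_eq_div, ← sub_div]
    exact div_neg_of_neg_of_pos (by linarith) hq0

/-- For every nonempty `V ⊆ ℤ`, `q ∈ (2,4)` and `μ > 0`, the ground-state level
`𝓔_{q,V}(μ)` is strictly negative. -/
theorem stmt2 (V : Set ℤ) (hV : V.Nonempty) (q μ : ℝ) (hq : 2 < q) (hq' : q < 4)
    (hμ : 0 < μ) : sInf (levelSet q V μ) < 0 := by
  obtain ⟨E, hE, hneg⟩ := exists_mem_levelSet_neg inH1_exp_neg_sq (by simp) mass_exp_neg_sq_pos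
    hV hq.le hq' hμ
  exact (csInf_le (levelSet_bddBelow hq.le hq' V μ) hE).trans_lt hneg
end

section
/- Let V = {m ∈ ℤ : m ≠ n(n+1) for every n ∈ ℕ}, q ∈ (2,4) and μ > 0. For every u ∈ H¹_μ(ℝ) with u(x) > 0 for all x ∈ ℝ, there exists w ∈ H¹_μ(ℝ) with ∫_ℝ |w'(x)|² dx = ∫_ℝ |u'(x)|² dx and ∑_{v∈V} |w(v)|^q > ∑_{v∈V} |u(v)|^q; in particular E_{q,V}(w) < E_{q,V}(u). -/
open MeasureTheory

/-- The set of integers that are not of the form `n(n+1)`, `n ∈ ℕ`. -/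
def Vgap : Set ℤ := {m | ∀ n : ℕ, m ≠ (n : ℤ) * (n + 1)}

/-! Since `u ∈ H¹`, the values `u(m)`, `m ∈ ℤ`, are square summable, so `g(m) = |u(m)|^q` is
summable for `q ≥ 2`. The omitted integers `n(n+1)` form a set bounded below, so after a translation
by a large integer `k` they only see a tail of `g`, which is smaller than the positive amount
`∑_{m ∉ V} g(m)` they saw before; the points of `V` therefore gain weight. Translation preserves the
mass and the kinetic energy. -/

open Set

section H1

variable {u u' : ℝ → ℝ}

lemma InH1.comp_add_right (hu : InH1 u u') (c : ℝ) :
    InH1 (fun x => u (x + c)) (fun x => u' (x + c)) := by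
  obtain ⟨hu2, hu'2, hftc⟩ := hu
  refine ⟨?_, ?_, fun a b => ?_⟩
  · exact hu2.comp_add_right c
  · exact hu'2.comp_add_right c
  · rw [intervalIntegral.integral_comp_add_right u', hftc]

lemma mass_comp_add_right (u : ℝ → ℝ) (c : ℝ) : mass (fun x => u (x + c)) = mass u :=
  integral_add_right_eq_self (fun x => u x ^ 2) c

instance isProbabilityMeasure_restrict_Ioc_add_one (a : ℝ) :
    IsProbabilityMeasure (volume.restrict (Ioc a (a + 1))) :=
  ⟨by simp⟩

lemma InH1.sq_le_integral_Ioc (hu : InH1 u u') (a : ℝ) :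
    u a ^ 2 ≤ 2 * (∫ x in Ioc a (a + 1), u x ^ 2) + 2 * ∫ x in Ioc a (a + 1), u' x ^ 2 := by
  obtain ⟨hu2, hu'2, hftc⟩ := hu
  set I := Ioc a (a + 1)
  have habs_meas : AEStronglyMeasurable (fun x => |u' x|) (volume.restrict I) := by
    simpa only [Real.sqrt_sq_eq_abs] using
      (Real.continuous_sqrt.comp_aestronglyMeasurable hu'2.aestronglyMeasurable).restrict
  have habs_int : Integrable (fun x => |u' x|) (volume.restrict I) := by
    refine (memLp_two_iff_integrable_sq habs_meas).2 ?_ |>.integrable one_le_two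
    simpa only [sq_abs] using hu'2.restrict
  have hjensen : (∫ x in I, |u' x|) ^ 2 ≤ ∫ x in I, u' x ^ 2 := by
    simpa only [sq_abs] using (even_two.convexOn_pow (𝕜 := ℝ)).map_integral_le
      (continuous_pow 2).continuousOn isClosed_univ (ae_of_all _ fun _ => mem_univ _) habs_int
      (by simpa only [Function.comp_def, sq_abs] using hu'2.restrict)
  have hosc : ∀ x ∈ I, |u x - u a| ≤ ∫ t in I, |u' t| := fun x hx => by
    rw [hftc, ← Real.norm_eq_abs]
    refine (intervalIntegral.norm_integral_le_integral_norm_uIoc).trans ?_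
    refine setIntegral_mono_set habs_int (ae_of_all _ fun t => abs_nonneg _) ?_
    rw [uIoc_of_le hx.1.le]
    exact (Ioc_subset_Ioc_right hx.2).eventuallyLE
  -- a point of `I` where `u²` does not exceed its mean over `I`
  obtain ⟨x, hxI, hx⟩ := exists_notMem_null_le_integral hu2.restrict
    (show volume.restrict I Iᶜ = 0 by simp [I])
  rw [notMem_compl_iff] at hxI
  calc u a ^ 2 ≤ 2 * u x ^ 2 + 2 * |u x - u a| ^ 2 := by
        nlinarith [sq_abs (u x - u a), sq_nonneg (2 * u x - u a)]
    _ ≤ 2 * (∫ t in I, u t ^ 2) + 2 * (∫ t in I, |u' t|) ^ 2 := by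
        gcongr
        exact hosc x hxI
    _ ≤ _ := by gcongr

lemma summable_setIntegral_Ioc_intCast {f : ℝ → ℝ} (hf : Integrable f) :
    Summable fun m : ℤ => ∫ x in Ioc (m : ℝ) (m + 1), f x :=
  (hasSum_integral_iUnion (fun _ => measurableSet_Ioc) (pairwise_disjoint_Ioc_intCast ℝ)
    (by rw [iUnion_Ioc_intCast]; exact hf.integrableOn)).summable

lemma InH1.summable_sq_intCast (hu : InH1 u u') : Summable fun m : ℤ => u m ^ 2 :=
  .of_nonneg_of_le (fun _ => sq_nonneg _) (fun m => hu.sq_le_integral_Ioc m)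
    (((summable_setIntegral_Ioc_intCast hu.1).mul_left 2).add
      ((summable_setIntegral_Ioc_intCast hu.2.1).mul_left 2))

end H1

lemma Summable.abs_rpow_of_sq {ι : Type*} {a : ι → ℝ} (ha : Summable fun i => a i ^ 2)
    {q : ℝ} (hq : 2 ≤ q) : Summable fun i => |a i| ^ q := by
  have hq0 : 0 ≤ q := by linarith
  have h2 : Memℓp a 2 := (memℓp_gen_iff (by norm_num)).2 (by simpa using ha)
  have hq : Memℓp a (ENNReal.ofReal q) :=
    h2.of_exponent_ge (by rw [← ENNReal.ofReal_ofNat 2]; exact ENNReal.ofReal_le_ofReal hq)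
  simpa [ENNReal.toReal_ofReal hq0] using
    (memℓp_gen_iff (by rw [ENNReal.toReal_ofReal hq0]; linarith)).1 hq

lemma Summable.exists_tsum_lt_tsum_comp_add {g : ℤ → ℝ} (hg : Summable g)
    (hg0 : 0 ≤ g) {S : Set ℤ} (hS : BddBelow Sᶜ) (hpos : 0 < ∑' s : ↥Sᶜ, g s) :
    ∃ k : ℤ, ∑' v : S, g v < ∑' v : S, g (v + k) := by
  obtain ⟨F, hF⟩ := ((tendsto_tsum_compl_atTop_zero g).eventually_lt_const hpos).exists
  obtain ⟨b, hb⟩ := hS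
  obtain ⟨c, hc⟩ := F.bddAbove
  set k := c - b + 1
  have hmiss : ∀ s : ↥Sᶜ, (s : ℤ) + k ∉ F := fun s hs => by
    have := hc hs
    have := hb s.2
    omega
  have hgk : Summable fun n => g (n + k) := hg.comp_injective (add_left_injective k)
  have hshift : ∑' s : ↥Sᶜ, g (s + k) ≤ ∑' x : {x // x ∉ F}, g x :=
    Summable.tsum_le_tsum_of_inj (fun s => ⟨s + k, hmiss s⟩)
      (fun s t hst => Subtype.ext (add_right_cancel (congrArg Subtype.val hst)))
      (fun _ _ => hg0 _) (fun _ => le_rfl) (hgk.subtype _) (hg.subtype _)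
  have hsplit := (hg.subtype S).tsum_add_tsum_compl (hg.subtype Sᶜ)
  have hsplitk := (hgk.subtype S).tsum_add_tsum_compl (hgk.subtype Sᶜ)
  have htranslate : ∑' n, g (n + k) = ∑' n, g n := (Equiv.addRight k).tsum_eq g
  exact ⟨k, by linarith⟩

lemma bddBelow_compl_Vgap : BddBelow Vgapᶜ := ⟨0, fun m hm => by
  obtain ⟨n, rfl⟩ : ∃ n : ℕ, m = n * (n + 1) := by simpa [Vgap] using hm
  positivity⟩

lemma zero_notMem_Vgap : (0 : ℤ) ∉ Vgap := fun h => h 0 (by simp)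

theorem stmt7_general (q μ : ℝ) (hq : 2 < q)
    (u u' : ℝ → ℝ) (hu : InH1 u u') (hmass : mass u = μ)
    (hpos : ∀ x : ℝ, 0 < u x) :
    ∃ w w' : ℝ → ℝ, InH1 w w' ∧ mass w = μ ∧
      (∫ x : ℝ, (w' x) ^ 2) = (∫ x : ℝ, (u' x) ^ 2) ∧
      (∑' v : Vgap, |u ((v : ℤ) : ℝ)| ^ q) < (∑' v : Vgap, |w ((v : ℤ) : ℝ)| ^ q) ∧
      energy q Vgap w w' < energy q Vgap u u' := by
  set g : ℤ → ℝ := fun m => |u m| ^ q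
  have hg_pos : ∀ m, 0 < g m := fun m => Real.rpow_pos_of_pos (abs_pos.2 (hpos m).ne') q
  have hg : Summable g := hu.summable_sq_intCast.abs_rpow_of_sq hq.le
  obtain ⟨k, hk⟩ := hg.exists_tsum_lt_tsum_comp_add (fun m => (hg_pos m).le)
    bddBelow_compl_Vgap
    ((hg.subtype _).tsum_pos (fun _ => (hg_pos _).le) ⟨0, zero_notMem_Vgap⟩ (hg_pos 0))
  have hkin : ∫ x, u' (x + k) ^ 2 = ∫ x, u' x ^ 2 :=
    integral_add_right_eq_self (fun x => u' x ^ 2) _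
  have hdefect : ∑' v : Vgap, |u v| ^ q < ∑' v : Vgap, |u (v + k)| ^ q := by
    simpa [g] using hk
  refine ⟨fun x => u (x + k), fun x => u' (x + k), hu.comp_add_right k,
    (mass_comp_add_right u k).trans hmass, hkin, hdefect, ?_⟩
  unfold energy
  rw [hkin]
  gcongr

/-- For `V = {m ∈ ℤ : m ≠ n(n+1) ∀ n ∈ ℕ}`, any everywhere-positive function of
mass `μ` can be strictly improved: there is `w` of mass `μ` with the same
kinetic energy and a strictly larger defect term, hence strictly smaller
energy. -/
theorem stmt7 (q μ : ℝ) (hq : 2 < q) (hq' : q < 4) (hμ : 0 < μ)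
    (u u' : ℝ → ℝ) (hu : InH1 u u') (hmass : mass u = μ)
    (hpos : ∀ x : ℝ, 0 < u x) :
    ∃ w w' : ℝ → ℝ, InH1 w w' ∧ mass w = μ ∧
      (∫ x : ℝ, (w' x) ^ 2) = (∫ x : ℝ, (u' x) ^ 2) ∧
      (∑' v : Vgap, |u ((v : ℤ) : ℝ)| ^ q) < (∑' v : Vgap, |w ((v : ℤ) : ℝ)| ^ q) ∧
      energy q Vgap w w' < energy q Vgap u u' :=
  stmt7_general q μ hq u u' hu hmass hpos
end
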